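/- arXiv:1401.7086 — 3 statements merged into one kernel-verified Lean document; each statement's English description precedes it below -/
import Mathlib

section
/- For any a < b, k ≥ 1, n ≥ 1, and points a ≤ x_1 < ... < x_n ≤ b, the quantity (x_1 - a)^{k+1}/(k+1) + Σ_{i=1}^{n-1} (x_{i+1} - x_i)^{k+1}/4^k + (b - x_n)^{k+1}/(k+1) is bounded below by C (b-a)^{k+1} (n+1)^{-k} for some constant C > 0 depending only on k (e.g. C = 4^{-k}). -/
/-!
The `n + 1` gaps `x₁ - a, x₂ - x₁, …, b - xₙ` are nonnegative and sum to `b - a`, so by the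
power mean inequality their `(k + 1)`-th powers sum to at least `(b - a) ^ (k + 1) / (n + 1) ^ k`.
Since `k + 1 ≤ 4 ^ k`, every term of the error sum is at least `4⁻¹ ^ k` times the corresponding
power, which gives the bound with `C = 4⁻¹ ^ k`.
-/

open Finset

section Nodes

variable {α : Type*} {n : ℕ} {a b : α} {x : Fin n → α}

def extendNodes (a b : α) (x : Fin n → α) : ℕ → α
  | 0 => a
  | i + 1 => if h : i < n then x ⟨i, h⟩ else b

theorem extendNodes_zero : extendNodes a b x 0 = a := rfl

theorem extendNodes_succ {i : ℕ} (hi : i < n) : extendNodes a b x (i + 1) = x ⟨i, hi⟩ :=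
  dif_pos hi

theorem extendNodes_succ_of_le {i : ℕ} (hi : n ≤ i) : extendNodes a b x (i + 1) = b :=
  dif_neg hi.not_gt

theorem monotone_extendNodes [Preorder α] (hab : a ≤ b) (hx : Monotone x)
    (hax : ∀ i, a ≤ x i) (hxb : ∀ i, x i ≤ b) : Monotone (extendNodes a b x) := by
  refine monotone_nat_of_le_succ fun i => ?_
  rcases i with _ | i
  · simp only [extendNodes]
    split_ifs <;> simp [*]
  · simp only [extendNodes]
    split_ifs with h₁ h₂
    · exact hx (Fin.mk_le_mk.2 i.le_succ)
    · exact hxb _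
    · omega
    · exact le_rfl

end Nodes

section PowerMean

variable {α : Type*} [Field α] [LinearOrder α] [IsStrictOrderedRing α]

theorem Monotone.pow_sub_div_le_sum_pow_sub {y : ℕ → α} (hy : Monotone y) (N k : ℕ) :
    (y N - y 0) ^ (k + 1) / (N : α) ^ k ≤ ∑ i ∈ range N, (y (i + 1) - y i) ^ (k + 1) := by
  have := pow_sum_div_card_le_sum_pow (s := range N)
    (fun i _ => sub_nonneg.2 (hy i.le_succ) : ∀ i ∈ range N, 0 ≤ y (i + 1) - y i) k
  rwa [sum_range_sub, card_range] at this

theorem natCast_add_one_le_four_pow (k : ℕ) : (k : α) + 1 ≤ 4 ^ k := by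
  have bernoulli := one_add_mul_le_pow (a := (3 : α)) (by norm_num) k
  norm_num at bernoulli
  nlinarith [(Nat.cast_nonneg k : (0 : α) ≤ k)]

theorem sum_range_div_four_pow_le {f : ℕ → α} {m : ℕ} (k : ℕ) (h₀ : 0 ≤ f 0)
    (hm : 0 ≤ f (m + 1)) :
    (∑ i ∈ range (m + 2), f i) / 4 ^ k ≤
      f 0 / (k + 1) + ∑ i ∈ range m, f (i + 1) / 4 ^ k + f (m + 1) / (k + 1) := by
  have hle (u : α) (hu : 0 ≤ u) : u / 4 ^ k ≤ u / (k + 1) :=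
    div_le_div_of_nonneg_left hu (by positivity) (natCast_add_one_le_four_pow k)
  rw [sum_range_succ, sum_range_succ', add_div, add_div, sum_div]
  linarith [hle _ h₀, hle _ hm]

end PowerMean

theorem error_sum_lower_bound (k : ℕ) :
    ∃ C : ℝ, 0 < C ∧
      ∀ (a b : ℝ), a < b → ∀ (n : ℕ) (hn : 1 ≤ n), ∀ x : Fin n → ℝ,
        StrictMono x → (∀ i, a ≤ x i) → (∀ i, x i ≤ b) →
        C * (b - a)^(k+1) / (n + 1)^k ≤
          (x ⟨0, hn⟩ - a)^(k+1) / ((k : ℝ) + 1)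
          + (∑ i : Fin (n - 1),
              (x ⟨i.1 + 1, by have := i.2; omega⟩ - x ⟨i.1, by have := i.2; omega⟩)^(k+1) / 4^k)
          + (b - x ⟨n - 1, by omega⟩)^(k+1) / ((k : ℝ) + 1) := by
  refine ⟨(4 ^ k)⁻¹, by positivity, fun a b hab n hn x hx hax hxb => ?_⟩
  obtain ⟨m, rfl⟩ : ∃ m, n = m + 1 := ⟨n - 1, by omega⟩
  have hy := monotone_extendNodes hab.le hx.monotone hax hxb
  have hgap (i : ℕ) : 0 ≤ (extendNodes a b x (i + 1) - extendNodes a b x i) ^ (k + 1) :=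
    pow_nonneg (sub_nonneg.2 (hy i.le_succ)) _
  calc (4 ^ k)⁻¹ * (b - a) ^ (k + 1) / (((m + 1 : ℕ) : ℝ) + 1) ^ k
      = (extendNodes a b x (m + 2) - extendNodes a b x 0) ^ (k + 1) / ((m + 2 : ℕ) : ℝ) ^ k
          / 4 ^ k := by
        rw [extendNodes_zero, extendNodes_succ_of_le le_rfl]; push_cast; ring
    _ ≤ (∑ i ∈ range (m + 2), (extendNodes a b x (i + 1) - extendNodes a b x i) ^ (k + 1))
          / 4 ^ k := by
        gcongr; exact hy.pow_sub_div_le_sum_pow_sub _ _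
    _ ≤ _ := sum_range_div_four_pow_le k (hgap 0) (hgap (m + 1))
    _ = _ := by
        rw [← Fin.sum_univ_eq_sum_range, extendNodes_zero, extendNodes_succ_of_le le_rfl,
          extendNodes_succ m.succ_pos, extendNodes_succ m.lt_succ_self]
        congr 2
        refine sum_congr rfl fun i _ => ?_
        rw [extendNodes_succ (by omega), extendNodes_succ (by omega)]
end

section
/- Let a < b, k ≥ 1 odd, and let a ≤ x_1 < x_2 < ... < x_n ≤ b be given points. Define f_n as in Theorem 1: -(x-x_1)^k on [a,x_1], the basic unit on each [x_i, x_{i+1}], and (x-x_n)^k on [x_n, b]. Then f_n(x_i) = 0 for all i, and ∫_a^b f_n(x) dx = (x_1-a)^{k+1}/(k+1) + Σ_{i=1}^{n-1} (x_{i+1}-x_i)^{k+1}/4^k + (b-x_n)^{k+1}/(k+1). -/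
/-! Between consecutive breakpoints the spline is `±(t - c)^k` plus a constant, so every piece
integrates explicitly, and since `k + 1` is even the value `(-h)^(k+1)` appearing at a left
endpoint equals `h^(k+1)`. For odd `k` the basic unit is continuous (its pieces agree at the
quarter points), which makes `f` integrable on each segment and lets the integral over `[a, b]`
be split at the nodes. -/

noncomputable def basicUnitOdd (k : ℕ) (p q x : ℝ) : ℝ :=
  if x ≤ p + (q - p)/4 then (x - p)^k
  else if x ≤ p + (q - p)/2 then (x - (p + (q - p)/2))^k + 2*((q - p)/4)^k
  else if x ≤ p + 3*(q - p)/4 then -(x - (p + (q - p)/2))^k + 2*((q - p)/4)^k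
  else -(x - q)^k

open MeasureTheory Set intervalIntegral

section IntervalIntegrable

variable {E : Type*} [NormedAddCommGroup E] {μ : Measure ℝ} {f : ℝ → E}

theorem intervalIntegrable_of_eqOn_Ioo [IsLocallyFiniteMeasure μ] [NullSingletonClass μ]
    {g : ℝ → E} {u v : ℝ} (huv : u ≤ v) (hg : Continuous g) (h : EqOn f g (Ioo u v)) :
    IntervalIntegrable f μ u v :=
  (hg.intervalIntegrable u v).congr_uIoo (uIoo_of_le huv ▸ h.symm)

theorem IntervalIntegrable.trans_fin {n : ℕ} {a : Fin (n + 1) → ℝ}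
    (hint : ∀ i : Fin n, IntervalIntegrable f μ (a i.castSucc) (a i.succ)) :
    IntervalIntegrable f μ (a 0) (a (Fin.last n)) := by
  induction n with
  | zero => simp
  | succ n ih =>
    have hinit (i : Fin n) :
        IntervalIntegrable f μ (a i.castSucc.castSucc) (a i.succ.castSucc) :=
      Fin.succ_castSucc i ▸ hint i.castSucc
    exact Fin.succ_last n ▸ (ih (a := fun i => a i.castSucc) hinit).trans (hint (Fin.last n))

theorem sum_integral_adjacent_intervals_fin [NormedSpace ℝ E] {n : ℕ} {a : Fin (n + 1) → ℝ}
    (hint : ∀ i : Fin n, IntervalIntegrable f μ (a i.castSucc) (a i.succ)) :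
    ∑ i : Fin n, ∫ x in a i.castSucc..a i.succ, f x ∂μ = ∫ x in a 0..a (Fin.last n), f x ∂μ := by
  induction n with
  | zero => simp
  | succ n ih =>
    have hinit (i : Fin n) :
        IntervalIntegrable f μ (a i.castSucc.castSucc) (a i.succ.castSucc) :=
      Fin.succ_castSucc i ▸ hint i.castSucc
    have hsum : ∑ i : Fin n, ∫ x in a i.castSucc.castSucc..a i.succ.castSucc, f x ∂μ =
        ∫ x in a 0..a (Fin.last n).castSucc, f x ∂μ := ih (a := fun i => a i.castSucc) hinit
    have hinit_int : IntervalIntegrable f μ (a 0) (a (Fin.last n).castSucc) :=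
      IntervalIntegrable.trans_fin (a := fun i => a i.castSucc) hinit
    rw [Fin.sum_univ_castSucc]
    simp only [Fin.succ_castSucc]
    rw [hsum, ← Fin.succ_last]
    exact integral_add_adjacent_intervals hinit_int (hint (Fin.last n))

end IntervalIntegrable

theorem integral_sub_pow (k : ℕ) (c u v : ℝ) :
    ∫ t in u..v, (t - c)^k = ((v - c)^(k+1) - (u - c)^(k+1)) / (k + 1) := by
  rw [integral_comp_sub_right (· ^ k), integral_pow]

section BasicUnit

variable {k : ℕ} {p q : ℝ}

theorem basicUnitOdd_right (hk : k ≠ 0) (hpq : p ≤ q) : basicUnitOdd k p q q = 0 := by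
  rcases hpq.eq_or_lt with rfl | hpq
  · simp [basicUnitOdd, hk]
  · simp only [basicUnitOdd]
    rw [if_neg (by linarith), if_neg (by linarith), if_neg (by linarith), sub_self,
      zero_pow hk, neg_zero]

theorem continuous_basicUnitOdd (hodd : Odd k) (hpq : p ≤ q) :
    Continuous (basicUnitOdd k p q) := by
  refine Continuous.if_le (by fun_prop) (Continuous.if_le (by fun_prop)
    (Continuous.if_le (by fun_prop) (by fun_prop) continuous_id continuous_const ?_)
    continuous_id continuous_const ?_) continuous_id continuous_const ?_
  · rintro t rfl
    have e1 : p + 3 * (q - p) / 4 - (p + (q - p) / 2) = (q - p) / 4 := by ring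
    have e2 : p + 3 * (q - p) / 4 - q = -((q - p) / 4) := by ring
    rw [e1, e2, hodd.neg_pow]
    ring
  · rintro t rfl
    rw [if_pos (by linarith), sub_self, zero_pow hodd.pos.ne', neg_zero]
  · rintro t rfl
    have e1 : p + (q - p) / 4 - p = (q - p) / 4 := by ring
    have e2 : p + (q - p) / 4 - (p + (q - p) / 2) = -((q - p) / 4) := by ring
    rw [if_pos (by linarith), e1, e2, hodd.neg_pow]
    ring

/- With `h = (q - p) / 4`, the outer quarters contribute `h^(k+1)/(k+1)` each and the inner ones
`2 h^(k+1) - h^(k+1)/(k+1)` each, for a total of `4 h^(k+1) = (q - p)^(k+1) / 4^k`. -/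
theorem integral_basicUnitOdd (hodd : Odd k) (hpq : p ≤ q) :
    ∫ t in p..q, basicUnitOdd k p q t = (q - p)^(k+1) / 4^k := by
  have hint (u v : ℝ) : IntervalIntegrable (basicUnitOdd k p q) volume u v :=
    (continuous_basicUnitOdd hodd hpq).intervalIntegrable u v
  have hpow (u v c : ℝ) : IntervalIntegrable (fun t => (t - c)^k) volume u v :=
    (by fun_prop : Continuous fun t : ℝ => (t - c)^k).intervalIntegrable u v
  have hnegpow (u v c : ℝ) : IntervalIntegrable (fun t => -(t - c)^k) volume u v :=
    (hpow u v c).neg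
  set h := (q - p) / 4 with hh
  set m := p + (q - p) / 2 with hm
  have quarter₁ : EqOn (basicUnitOdd k p q) (fun t => (t - p)^k) (Ioo p (p + h)) :=
    fun t ht => by simp only [basicUnitOdd]; split_ifs <;> first | rfl | linarith [ht.1, ht.2]
  have quarter₂ : EqOn (basicUnitOdd k p q) (fun t => (t - m)^k + 2 * h^k) (Ioo (p + h) m) :=
    fun t ht => by simp only [basicUnitOdd]; split_ifs <;> first | rfl | linarith [ht.1, ht.2]
  have quarter₃ : EqOn (basicUnitOdd k p q) (fun t => -(t - m)^k + 2 * h^k)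
      (Ioo m (p + 3 * (q - p) / 4)) :=
    fun t ht => by simp only [basicUnitOdd]; split_ifs <;> first | rfl | linarith [ht.1, ht.2]
  have quarter₄ : EqOn (basicUnitOdd k p q) (fun t => -(t - q)^k) (Ioo (p + 3 * (q - p) / 4) q) :=
    fun t ht => by simp only [basicUnitOdd]; split_ifs <;> first | rfl | linarith [ht.1, ht.2]
  rw [← integral_add_adjacent_intervals (hint p m) (hint m q),
    ← integral_add_adjacent_intervals (hint p (p + h)) (hint (p + h) m),
    ← integral_add_adjacent_intervals (hint m (p + 3 * (q - p) / 4)) (hint _ q),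
    integral_congr_Ioo_of_le (by linarith) quarter₁,
    integral_congr_Ioo_of_le (by linarith) quarter₂,
    integral_congr_Ioo_of_le (by linarith) quarter₃,
    integral_congr_Ioo_of_le (by linarith) quarter₄,
    integral_add (hpow _ _ m) intervalIntegrable_const,
    integral_add (hnegpow _ _ m) intervalIntegrable_const,
    intervalIntegral.integral_neg, intervalIntegral.integral_neg,
    integral_sub_pow, integral_sub_pow, integral_sub_pow, integral_sub_pow,
    intervalIntegral.integral_const, intervalIntegral.integral_const, smul_eq_mul, smul_eq_mul,
    show p + h - m = -h by ring, show p + 3 * (q - p) / 4 - q = -h by ring,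
    hodd.add_one.neg_pow, sub_self, sub_self, zero_pow (Nat.succ_ne_zero k)]
  have hq : q = p + 4 * h := by rw [hh]; ring
  have hm' : m = p + 2 * h := by rw [hm, hh]; ring
  clear_value h m
  subst hq hm'
  field_simp
  ring

end BasicUnit

theorem full_spline_integral_odd_general (k : ℕ) (hk : 1 ≤ k) (hodd : Odd k)
    (a b : ℝ) (m : ℕ) (x : Fin (m + 1) → ℝ) (hmono : StrictMono x)
    (ha : a ≤ x 0) (hb : x (Fin.last m) ≤ b) (f : ℝ → ℝ)
    (h1 : ∀ t ∈ Set.Icc a (x 0), f t = -(t - x 0)^k)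
    (h2 : ∀ i : Fin m, ∀ t ∈ Set.Icc (x i.castSucc) (x i.succ),
        f t = basicUnitOdd k (x i.castSucc) (x i.succ) t)
    (h3 : ∀ t ∈ Set.Icc (x (Fin.last m)) b, f t = (t - x (Fin.last m))^k) :
    (∀ i, f (x i) = 0) ∧
    ∫ t in a..b, f t =
      (x 0 - a)^(k+1) / ((k : ℝ) + 1)
      + (∑ i : Fin m, (x i.succ - x i.castSucc)^(k+1) / 4^k)
      + (b - x (Fin.last m))^(k+1) / ((k : ℝ) + 1) := by
  have hk0 : k ≠ 0 := by omega
  have hle (i : Fin m) : x i.castSucc ≤ x i.succ := hmono.monotone i.castSucc_le_succ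
  constructor
  · refine Fin.cases (by simp [h1 (x 0) ⟨ha, le_rfl⟩, hk0]) fun i => ?_
    rw [h2 i _ ⟨hle i, le_rfl⟩, basicUnitOdd_right hk0 (hle i)]
  have hL : EqOn f (fun t => -(t - x 0)^k) (Ioo a (x 0)) :=
    fun t ht => h1 t (Ioo_subset_Icc_self ht)
  have hR : EqOn f (fun t => (t - x (Fin.last m))^k) (Ioo (x (Fin.last m)) b) :=
    fun t ht => h3 t (Ioo_subset_Icc_self ht)
  have hM (i : Fin m) : EqOn f (basicUnitOdd k (x i.castSucc) (x i.succ))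
      (Ioo (x i.castSucc) (x i.succ)) :=
    fun t ht => h2 i t (Ioo_subset_Icc_self ht)
  have hIL := intervalIntegrable_of_eqOn_Ioo (μ := volume) ha (by fun_prop) hL
  have hIR := intervalIntegrable_of_eqOn_Ioo (μ := volume) hb (by fun_prop) hR
  have hIM (i : Fin m) := intervalIntegrable_of_eqOn_Ioo (μ := volume) (hle i)
    (continuous_basicUnitOdd hodd (hle i)) (hM i)
  rw [← integral_add_adjacent_intervals (hIL.trans (IntervalIntegrable.trans_fin hIM)) hIR,
    ← integral_add_adjacent_intervals hIL (IntervalIntegrable.trans_fin hIM),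
    ← sum_integral_adjacent_intervals_fin hIM, integral_congr_Ioo_of_le ha hL,
    integral_congr_Ioo_of_le hb hR, intervalIntegral.integral_neg, integral_sub_pow,
    integral_sub_pow, sub_self, sub_self, zero_pow (Nat.succ_ne_zero k),
    show a - x 0 = -(x 0 - a) by ring, hodd.add_one.neg_pow,
    Finset.sum_congr rfl fun i _ =>
      (integral_congr_Ioo_of_le (hle i) (hM i)).trans (integral_basicUnitOdd hodd (hle i))]
  ring

theorem full_spline_integral_odd (k : ℕ) (hk : 1 ≤ k) (hodd : Odd k)
    (a b : ℝ) (hab : a < b) (m : ℕ) (x : Fin (m + 1) → ℝ) (hmono : StrictMono x)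
    (ha : a ≤ x 0) (hb : x (Fin.last m) ≤ b) (f : ℝ → ℝ)
    (h1 : ∀ t ∈ Set.Icc a (x 0), f t = -(t - x 0)^k)
    (h2 : ∀ i : Fin m, ∀ t ∈ Set.Icc (x i.castSucc) (x i.succ),
        f t = basicUnitOdd k (x i.castSucc) (x i.succ) t)
    (h3 : ∀ t ∈ Set.Icc (x (Fin.last m)) b, f t = (t - x (Fin.last m))^k) :
    (∀ i, f (x i) = 0) ∧
    ∫ t in a..b, f t =
      (x 0 - a)^(k+1) / ((k : ℝ) + 1)
      + (∑ i : Fin m, (x i.succ - x i.castSucc)^(k+1) / 4^k)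
      + (b - x (Fin.last m))^(k+1) / ((k : ℝ) + 1) :=
  full_spline_integral_odd_general k hk hodd a b m x hmono ha hb f h1 h2 h3
end

section
/- The basic unit function f on [p,q] satisfies 0 ≤ f(x) ≤ 2(Δ/4)^k for all x ∈ [p,q], where Δ = q - p, with maximum attained (for odd k at the midpoint; for even k on the middle region). -/
noncomputable def basicUnitEven (k : ℕ) (p q x : ℝ) : ℝ :=
  if x ≤ p + (q - p)/4 then (x - p)^k
  else if x ≤ p + 3*(q - p)/4 then -(x - (p + (q - p)/2))^k + 2*((q - p)/4)^k
  else (x - q)^k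

noncomputable def basicUnit (k : ℕ) (p q x : ℝ) : ℝ :=
  if Odd k then basicUnitOdd k p q x else basicUnitEven k p q x

private lemma pow_mem_of_abs_le (k : ℕ) {a d : ℝ} (h1 : -d ≤ a) (h2 : a ≤ d) :
    a ^ k ≤ d ^ k ∧ -d ^ k ≤ a ^ k := by
  have habs : |a ^ k| ≤ d ^ k := by
    rw [abs_pow]
    exact pow_le_pow_left₀ (abs_nonneg a) (abs_le.mpr ⟨h1, h2⟩) k
  have := abs_le.mp habs
  exact ⟨this.2, this.1⟩

theorem basic_unit_bounds (k : ℕ) (hk : 1 ≤ k) (p q : ℝ) (hpq : p < q) :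
    (∀ x ∈ Set.Icc p q,
      0 ≤ basicUnit k p q x ∧ basicUnit k p q x ≤ 2 * ((q - p)/4)^k) ∧
    ∃ x ∈ Set.Icc p q, basicUnit k p q x = 2 * ((q - p)/4)^k := by
  have hd : 0 < (q - p)/4 := by linarith
  have hdk : 0 ≤ ((q - p)/4) ^ k := le_of_lt (pow_pos hd k)
  constructor
  · rintro x ⟨hxl, hxr⟩
    unfold basicUnit basicUnitOdd basicUnitEven
    by_cases hko : Odd k
    · simp only [hko, if_true]
      split_ifs with h1 h2 h3
      · -- (x-p)^k, 0 ≤ x-p ≤ d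
        have ha : 0 ≤ x - p := by linarith
        have := pow_mem_of_abs_le k (by linarith : -((q-p)/4) ≤ x - p) (by linarith)
        have h0 : 0 ≤ (x - p) ^ k := pow_nonneg ha k
        constructor <;> linarith [this.1]
      · -- a = x - (p + (q-p)/2) ∈ (-d, 0]
        set a := x - (p + (q - p)/2) with hadef
        have ha1 : -((q - p)/4) ≤ a := by rw [hadef]; push_neg at h1; linarith
        have ha2 : a ≤ 0 := by rw [hadef]; linarith
        have hbounds := pow_mem_of_abs_le k ha1 (by linarith)
        have hneg : a ^ k ≤ 0 := hko.pow_nonpos ha2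
        constructor <;> linarith [hbounds.2]
      · -- a = x - (p + (q-p)/2) ∈ (0, d]
        set a := x - (p + (q - p)/2) with hadef
        have ha1 : 0 ≤ a := by rw [hadef]; push_neg at h2; linarith
        have ha2 : a ≤ (q - p)/4 := by rw [hadef]; linarith
        have hbounds := pow_mem_of_abs_le k (by linarith) ha2
        have hpos : 0 ≤ a ^ k := pow_nonneg ha1 k
        constructor <;> linarith [hbounds.1]
      · -- a = x - q ∈ (-d, 0]
        have ha1 : -((q - p)/4) ≤ x - q := by push_neg at h3; linarith
        have ha2 : x - q ≤ 0 := by linarith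
        have hbounds := pow_mem_of_abs_le k ha1 (by linarith)
        have hneg : (x - q) ^ k ≤ 0 := hko.pow_nonpos ha2
        constructor <;> linarith [hbounds.2]
    · simp only [hko, if_false]
      have hke : Even k := Nat.not_odd_iff_even.mp hko
      split_ifs with h1 h2
      · have ha : 0 ≤ x - p := by linarith
        have := pow_mem_of_abs_le k (by linarith : -((q-p)/4) ≤ x - p) (by linarith)
        have h0 : 0 ≤ (x - p) ^ k := pow_nonneg ha k
        constructor <;> linarith [this.1]
      · set a := x - (p + (q - p)/2) with hadef
        have ha1 : -((q - p)/4) ≤ a := by rw [hadef]; push_neg at h1; linarith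
        have ha2 : a ≤ (q - p)/4 := by rw [hadef]; linarith
        have hbounds := pow_mem_of_abs_le k ha1 ha2
        have hpos : 0 ≤ a ^ k := hke.pow_nonneg a
        constructor <;> linarith [hbounds.1]
      · have ha1 : -((q - p)/4) ≤ x - q := by linarith
        have ha2 : x - q ≤ 0 := by push_neg at h2; linarith
        have hbounds := pow_mem_of_abs_le k ha1 (by linarith)
        have hpos : 0 ≤ (x - q) ^ k := hke.pow_nonneg _
        constructor <;> linarith [hbounds.1]
  · refine ⟨p + (q - p)/2, ⟨by linarith, by linarith⟩, ?_⟩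
    have hzero : (p + (q - p)/2 - (p + (q - p)/2)) ^ k = 0 := by
      rw [sub_self]
      exact zero_pow (by omega)
    unfold basicUnit basicUnitOdd basicUnitEven
    by_cases hko : Odd k
    · simp only [hko, if_true]
      rw [if_neg (by linarith), if_pos (by linarith), hzero]
      ring
    · simp only [hko, if_false]
      rw [if_neg (by linarith), if_pos (by linarith), hzero]
      ring
end
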